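/- arXiv:2510.22993 — 2 statements merged into one kernel-verified Lean document; each statement's English description precedes it below -/
import Mathlib

section
/- Let X and Y be types, D a probability distribution (PMF) over X, f : X → Y a function, G a finite set of functions X → Y, ε ∈ [0,1], and k ∈ ℕ. Then the probability, over k independent draws x_1, …, x_k from D, that there exists g ∈ G with Pr_{x~D}[g(x) ≠ f(x)] ≥ ε and g(x_i) = f(x_i) for all i ∈ {1,…,k}, is at most |G| · (1 − ε)^k. -/
/-! The bad event is contained in the union, over the hypotheses `g ∈ G` of error at least `ε`,
of the events that `g` agrees with `f` on all `k` draws. Under the `k`-fold product of `D`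
such an event has probability `Pr[g = f] ^ k ≤ (1 - ε) ^ k`, and the union bound over at most
`|G|` of them gives the claim. -/

open Finset MeasureTheory

theorem ENNReal.tsum_pi_prod_eq_prod_tsum {X : Type*} : ∀ {k : ℕ} (p : Fin k → X → ENNReal),
    ∑' v : Fin k → X, ∏ i, p i (v i) = ∏ i, ∑' x, p i x
  | 0, p => by
    simp only [univ_eq_empty, prod_empty]
    exact tsum_eq_single Fin.elim0 fun v hv => absurd (Subsingleton.elim v _) hv
  | k + 1, p => by
    rw [← (Fin.consEquiv fun _ => X).tsum_eq, ENNReal.tsum_prod', Fin.prod_univ_succ,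
      ← ENNReal.tsum_mul_right]
    refine tsum_congr fun x => ?_
    simp only [Fin.consEquiv_apply, Fin.prod_univ_succ, Fin.cons_zero, Fin.cons_succ,
      ENNReal.tsum_mul_left]
    rw [ENNReal.tsum_pi_prod_eq_prod_tsum]

namespace PMF

variable {X : Type*}

noncomputable def iid (D : PMF X) (k : ℕ) : PMF (Fin k → X) :=
  ⟨fun v => ∏ i, D (v i), ENNReal.summable.hasSum_iff.2 <| by
    simp [ENNReal.tsum_pi_prod_eq_prod_tsum, D.tsum_coe]⟩

theorem iid_apply (D : PMF X) (k : ℕ) (v : Fin k → X) : D.iid k v = ∏ i, D (v i) := rfl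

theorem toOuterMeasure_iid_setOf_forall_mem (D : PMF X) (k : ℕ) (s : Set X) :
    (D.iid k).toOuterMeasure {v | ∀ i, v i ∈ s} = D.toOuterMeasure s ^ k := by
  classical
  have hindicator : ∀ v : Fin k → X,
      {v | ∀ i, v i ∈ s}.indicator (D.iid k) v = ∏ i, s.indicator D (v i) := fun v => by
    simp [Set.indicator_apply, prod_ite_zero, iid_apply]
  rw [toOuterMeasure_apply, tsum_congr hindicator, ENNReal.tsum_pi_prod_eq_prod_tsum,
    toOuterMeasure_apply, prod_const, card_univ, Fintype.card_fin]

theorem toOuterMeasure_add_toOuterMeasure_compl (D : PMF X) (s : Set X) :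
    D.toOuterMeasure s + D.toOuterMeasure sᶜ = 1 := by
  rw [toOuterMeasure_apply, toOuterMeasure_apply, ← ENNReal.tsum_add, ← D.tsum_coe]
  exact tsum_congr fun x => s.indicator_self_add_compl_apply D x

theorem toOuterMeasure_le_one_sub {D : PMF X} {s : Set X} {ε : ENNReal}
    (h : ε ≤ D.toOuterMeasure sᶜ) : D.toOuterMeasure s ≤ 1 - ε := by
  have hcompl : D.toOuterMeasure sᶜ ≠ ⊤ := ne_top_of_le_ne_top ENNReal.one_ne_top (by
    rw [← toOuterMeasure_add_toOuterMeasure_compl D s]; exact le_add_self)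
  rw [ENNReal.eq_sub_of_add_eq hcompl (toOuterMeasure_add_toOuterMeasure_compl D s)]
  exact tsub_le_tsub_left h 1

end PMF

theorem union_bound_consistency_general {X Y : Type*} (D : PMF X) (f : X → Y)
    (G : Finset (X → Y)) (ε : ENNReal) (k : ℕ) :
    ∑' v : Fin k → X,
      Set.indicator {v : Fin k → X |
          ∃ g ∈ G, ε ≤ D.toOuterMeasure {x | g x ≠ f x} ∧ ∀ i, g (v i) = f (v i)}
        (fun v => ∏ i, D (v i)) v ≤ (G.card : ENNReal) * (1 - ε) ^ k := by
  classical
  set bad := G.filter fun g => ε ≤ D.toOuterMeasure {x | g x ≠ f x}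
  calc _ = (D.iid k).toOuterMeasure
        {v | ∃ g ∈ G, ε ≤ D.toOuterMeasure {x | g x ≠ f x} ∧ ∀ i, g (v i) = f (v i)} :=
        (PMF.toOuterMeasure_apply _ _).symm
    _ ≤ (D.iid k).toOuterMeasure (⋃ g ∈ bad, {v | ∀ i, v i ∈ {x | g x = f x}}) :=
        measure_mono fun v ⟨g, hg, hbad, hv⟩ => Set.mem_biUnion (mem_filter.2 ⟨hg, hbad⟩) hv
    _ ≤ ∑ g ∈ bad, (D.iid k).toOuterMeasure {v | ∀ i, v i ∈ {x | g x = f x}} :=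
        measure_biUnion_finset_le _ _
    _ = ∑ g ∈ bad, D.toOuterMeasure {x | g x = f x} ^ k := by
        simp only [PMF.toOuterMeasure_iid_setOf_forall_mem]
    _ ≤ ∑ _g ∈ bad, (1 - ε) ^ k :=
        sum_le_sum fun _g hg =>
          pow_le_pow_left' (PMF.toOuterMeasure_le_one_sub (mem_filter.1 hg).2) k
    _ ≤ (G.card : ENNReal) * (1 - ε) ^ k := by
        rw [sum_const, nsmul_eq_mul]
        gcongr
        exact filter_subset _ _

/-- Over `k` i.i.d. draws from `D`, the probability that some `g` in the
finite class `G` has error `Pr_{x~D}[g x ≠ f x] ≥ ε` yet is consistent with all `k`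
labeled samples is at most `|G| * (1 - ε)^k`. -/
theorem union_bound_consistency {X Y : Type*} (D : PMF X) (f : X → Y)
    (G : Finset (X → Y)) (ε : ENNReal) (hε : ε ≤ 1) (k : ℕ) :
    ∑' v : Fin k → X,
      Set.indicator {v : Fin k → X |
          ∃ g ∈ G, ε ≤ D.toOuterMeasure {x | g x ≠ f x} ∧ ∀ i, g (v i) = f (v i)}
        (fun v => ∏ i, D (v i)) v ≤ (G.card : ENNReal) * (1 - ε) ^ k :=
  union_bound_consistency_general D f G ε k
end

section
/- Fix a finite nonempty vocabulary Σ and set X = List Σ. Let H be a finite nonempty set of functions X → X, let T ≥ 1, let f_1, …, f_T ∈ H, and let f_0 = f_T ∘ ⋯ ∘ f_2 ∘ f_1. Let D_0 be a probability distribution (PMF) over X, and for each t ∈ {1,…,T} suppose the simple-task input distribution D_t equals the pushforward of D_0 under f_{t−1} ∘ ⋯ ∘ f_1 (with D_1 = D_0), i.e., D_t is the law of z_t(x) for x ~ D_0, where z_1(x) = x and z_t(x) = f_{t−1} ∘ ⋯ ∘ f_1(x). Suppose for all f ≠ g in H and all t ∈ {1,…,T}, Pr_{x'~D_t}[f(x')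 ≠ g(x')] > ε_0 for some ε_0 > 0. For each t, draw k_t i.i.d. inputs from D_t labeled by f_t to form S_t, and independently draw k_c i.i.d. inputs from D_0 to form chain-of-thought composite examples with step-t pairs (z_t(x_i), z_{t+1}(x_i)). Let 0 < δ < 1 and suppose k_c + k_t ≥ (1/ε_0)·(ln|H| + ln(T/δ)) for every t ∈ {1,…,T}. Then with probability at least 1 − δ over all the datasets, for every t ∈ {1,…,T}, the only g ∈ H consistent with both S_t and the step-t pairs of the composite examples is g = f_t, and hence the composition of per-step consistent hypotheses equals f_0. -/
/-- `compChain fs` is the composite function `f_T ∘ ⋯ ∘ f_2 ∘ f_1` where `f_{t+1} = fs t`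
(i.e. `fs 0` is applied first). -/
def compChain {X : Type*} {T : ℕ} (fs : Fin T → (X → X)) (x : X) : X :=
  (List.ofFn fs).foldl (fun a g => g a) x

/-- `partialChain fs t x` is the intermediate value `z_{t+1}(x) = f_t ∘ ⋯ ∘ f_1 (x)`
of the chain of thought on input `x` (so `partialChain fs 0 x = x`). -/
def partialChain {X : Type*} {T : ℕ} (fs : Fin T → (X → X)) (t : ℕ) (x : X) : X :=
  ((List.ofFn fs).take t).foldl (fun a g => g a) x

/-!
Fix a step `t` and a wrong hypothesis `g ∈ H`. The simple-task inputs of step `t` and the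
step-`t` states `z_t(x)` of the composite inputs are `k_c + k_t` independent draws from `D t`
(for the latter because `D t` is the law of `z_t` under `D₀`), so `g` is consistent with all of
them with probability `q ^ (k_c + k_t)`, where `q = D t {g = f_t} ≤ 1 - ε₀ ≤ exp (-ε₀)`. The
sample size makes this at most `δ / (T |H|)`, and a union bound over the at most `T |H|` pairs
`(t, g)` bounds the failure probability by `δ`. Once every step is identified, every per-step
consistent choice of hypotheses is `fs` itself, so its composition is `f₀`.
-/

open scoped ENNReal

universe u v

theorem ENNReal.tsum_pi_prod {ι : Type u} [Fintype ι] {β : ι → Type v} (g : ∀ i, β i → ℝ≥0∞) :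
    ∑' f : ∀ i, β i, ∏ i, g i (f i) = ∏ i, ∑' b, g i b := by
  refine Fintype.induction_empty_option (P := fun ι _ => ∀ (β : ι → Type v)
    (g : ∀ i, β i → ℝ≥0∞), ∑' f : ∀ i, β i, ∏ i, g i (f i) = ∏ i, ∑' b, g i b) ?_ ?_ ?_ ι β g
  · intro α ι _ e ih β g
    let := Fintype.ofEquiv ι e.symm
    rw [← (Equiv.piCongrLeft β e).tsum_eq]
    simp_rw [← e.prod_comp, Equiv.piCongrLeft_apply_apply]
    exact ih _ _
  · intro β g
    simp
  · intro α _ ih β g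
    rw [← Equiv.piOptionEquivProd.symm.tsum_eq, ENNReal.tsum_prod']
    simp only [Fintype.prod_option, Equiv.piOptionEquivProd_symm_apply, ENNReal.tsum_mul_left,
      ENNReal.tsum_mul_right, ih]

theorem Set.indicator_univ_pi_prod_apply {ι M : Type*} [Fintype ι] [CommMonoidWithZero M]
    {β : ι → Type*} (S : ∀ i, Set (β i)) (g : ∀ i, β i → M) (f : ∀ i, β i) :
    (Set.univ.pi S).indicator (fun f => ∏ i, g i (f i)) f = ∏ i, (S i).indicator (g i) (f i) := by
  by_cases hf : f ∈ Set.univ.pi S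
  · rw [Set.indicator_of_mem hf]
    exact Finset.prod_congr rfl fun i _ => (Set.indicator_of_mem (hf i trivial) _).symm
  · obtain ⟨i, hi⟩ : ∃ i, f i ∉ S i := by simpa [Set.mem_univ_pi] using hf
    rw [Set.indicator_of_notMem hf, Finset.prod_eq_zero (Finset.mem_univ i)
      (Set.indicator_of_notMem hi _)]

theorem Set.indicator_prod_mul_apply {α β M : Type*} [MulZeroClass M] (A : Set α) (B : Set β)
    (g : α → M) (h : β → M) (x : α × β) :
    (A ×ˢ B).indicator (fun x => g x.1 * h x.2) x = A.indicator g x.1 * B.indicator h x.2 := by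
  simp only [Set.indicator, Set.mem_prod]
  split_ifs <;> simp_all

theorem MeasureTheory.measure_iUnion_biUnion_le_mul {α ι κ F : Type*} [Fintype ι]
    [FunLike F (Set α) ℝ≥0∞] [OuterMeasureClass F α] (μ : F) (s : ι → Finset κ)
    (A : ι → κ → Set α) {m : ℕ} {c : ℝ≥0∞} (hs : ∀ i, (s i).card ≤ m)
    (hA : ∀ i, ∀ j ∈ s i, μ (A i j) ≤ c) :
    μ (⋃ i, ⋃ j ∈ s i, A i j) ≤ Fintype.card ι * m * c :=
  calc μ (⋃ i, ⋃ j ∈ s i, A i j) ≤ ∑ i, ∑ j ∈ s i, μ (A i j) :=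
        (measure_iUnion_fintype_le μ _).trans
          (Finset.sum_le_sum fun i _ => measure_biUnion_finset_le _ _)
    _ ≤ ∑ _i : ι, m * c := Finset.sum_le_sum fun i _ =>
        (Finset.sum_le_card_nsmul _ _ _ (hA i)).trans (by
          rw [nsmul_eq_mul]; gcongr; exact_mod_cast hs i)
    _ = Fintype.card ι * m * c := by
      rw [Finset.sum_const, nsmul_eq_mul, Finset.card_univ, mul_assoc]

theorem Real.exp_neg_mul_le_of_sample_size {ε δ N T n : ℝ} (hε : 0 < ε) (hδ : 0 < δ)
    (hN : 0 < N) (hT : 0 < T) (hn : 1 / ε * (Real.log N + Real.log (T / δ)) ≤ n) :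
    Real.exp (-(ε * n)) ≤ δ / (T * N) := by
  have hlog : Real.log N + Real.log (T / δ) = -Real.log (δ / (T * N)) := by
    rw [← Real.log_mul hN.ne' (by positivity), ← Real.log_inv]
    congr 1
    field_simp
  rw [hlog, one_div, inv_mul_le_iff₀ hε, neg_le] at hn
  calc Real.exp (-(ε * n)) ≤ Real.exp (Real.log (δ / (T * N))) := Real.exp_le_exp.mpr hn
    _ = δ / (T * N) := Real.exp_log (by positivity)

theorem ENNReal.natCast_mul_ofReal_div_le (n : ℕ) {a : ℝ} (ha : 0 ≤ a) :
    (n : ℝ≥0∞) * ENNReal.ofReal (a / n) ≤ ENNReal.ofReal a := by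
  rw [← ENNReal.ofReal_natCast, ← ENNReal.ofReal_mul n.cast_nonneg, ← mul_div_assoc]
  exact ENNReal.ofReal_le_ofReal (div_le_of_le_mul₀ n.cast_nonneg ha (mul_comm _ _).le)

namespace PMF

variable {α β : Type*}

theorem toOuterMeasure_add_compl (p : PMF α) (s : Set α) :
    p.toOuterMeasure s + p.toOuterMeasure sᶜ = 1 := by
  rw [toOuterMeasure_apply, toOuterMeasure_apply, ← ENNReal.tsum_add]
  simp only [Set.indicator_self_add_compl_apply, tsum_coe]

theorem one_sub_le_toReal_toOuterMeasure (p : PMF α) {s : Set α} {δ : ℝ} (hδ : 0 ≤ δ)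
    (h : p.toOuterMeasure sᶜ ≤ ENNReal.ofReal δ) : 1 - δ ≤ (p.toOuterMeasure s).toReal := by
  have hsum := p.toOuterMeasure_add_compl s
  have hne : ∀ t, p.toOuterMeasure t ≠ ⊤ := fun t => by
    rw [toOuterMeasure_apply]; exact p.tsum_coe_indicator_ne_top t
  rw [← ENNReal.toReal_eq_toReal_iff' (ENNReal.add_ne_top.mpr ⟨hne _, hne _⟩) ENNReal.one_ne_top,
    ENNReal.toReal_add (hne _) (hne _), ENNReal.toReal_one] at hsum
  linarith [ENNReal.toReal_le_of_le_ofReal hδ h]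

theorem toOuterMeasure_pow_le_exp_neg (p : PMF α) {s : Set α} {ε : ℝ} (hε : 0 ≤ ε)
    (h : ENNReal.ofReal ε < p.toOuterMeasure sᶜ) (n : ℕ) :
    p.toOuterMeasure s ^ n ≤ ENNReal.ofReal (Real.exp (-(ε * n))) := by
  have hs : p.toOuterMeasure s ≤ ENNReal.ofReal (Real.exp (-ε)) :=
    calc p.toOuterMeasure s ≤ 1 - ENNReal.ofReal ε :=
          ENNReal.le_sub_of_add_le_right ENNReal.ofReal_ne_top
            ((add_le_add_right h.le _).trans (p.toOuterMeasure_add_compl s).le)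
      _ = ENNReal.ofReal (1 - ε) := by rw [ENNReal.ofReal_sub 1 hε, ENNReal.ofReal_one]
      _ ≤ ENNReal.ofReal (Real.exp (-ε)) := ENNReal.ofReal_le_ofReal (Real.one_sub_le_exp_neg ε)
  calc p.toOuterMeasure s ^ n ≤ ENNReal.ofReal (Real.exp (-ε)) ^ n := pow_le_pow_left' hs n
    _ = ENNReal.ofReal (Real.exp (-(ε * n))) := by
      rw [← ENNReal.ofReal_pow (Real.exp_nonneg _), ← Real.exp_nat_mul]
      ring_nf

section pi

variable {ι : Type*} [Fintype ι] {β : ι → Type*}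

noncomputable def pi (p : ∀ i, PMF (β i)) : PMF (∀ i, β i) :=
  ⟨fun f => ∏ i, p i (f i), by
    rw [ENNReal.summable.hasSum_iff, ENNReal.tsum_pi_prod]
    simp⟩

theorem coe_pi (p : ∀ i, PMF (β i)) : ⇑(pi p) = fun f => ∏ i, p i (f i) := rfl

theorem toOuterMeasure_pi_univ_pi (p : ∀ i, PMF (β i)) (S : ∀ i, Set (β i)) :
    (pi p).toOuterMeasure (Set.univ.pi S) = ∏ i, (p i).toOuterMeasure (S i) := by
  simp only [toOuterMeasure_apply, coe_pi, Set.indicator_univ_pi_prod_apply]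
  exact ENNReal.tsum_pi_prod _

theorem toOuterMeasure_pi_eval_preimage (p : ∀ i, PMF (β i)) (j : ι) (S : Set (β j)) :
    (pi p).toOuterMeasure (Function.eval j ⁻¹' S) = (p j).toOuterMeasure S := by
  classical
  rw [Set.eval_preimage, toOuterMeasure_pi_univ_pi, Finset.prod_eq_single j]
  · simp
  · intro i _ hij
    simp [hij, toOuterMeasure_apply_eq_one_iff]
  · simp

end pi

noncomputable def prod (p : PMF α) (q : PMF β) : PMF (α × β) :=
  ⟨fun x => p x.1 * q x.2, by
    rw [ENNReal.summable.hasSum_iff, ENNReal.tsum_prod']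
    simp [ENNReal.tsum_mul_left]⟩

theorem coe_prod (p : PMF α) (q : PMF β) : ⇑(p.prod q) = fun x => p x.1 * q x.2 := rfl

theorem toOuterMeasure_prod_prod (p : PMF α) (q : PMF β) (A : Set α) (B : Set β) :
    (p.prod q).toOuterMeasure (A ×ˢ B) = p.toOuterMeasure A * q.toOuterMeasure B := by
  simp only [toOuterMeasure_apply, coe_prod, Set.indicator_prod_mul_apply, ENNReal.tsum_prod',
    ENNReal.tsum_mul_left, ENNReal.tsum_mul_right]

end PMF

theorem partialChain_succ {X : Type*} {T : ℕ} (fs : Fin T → X → X) (t : Fin T) (x : X) :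
    partialChain fs ((t : ℕ) + 1) x = fs t (partialChain fs t x) := by
  have h : (List.ofFn fs)[(t : ℕ)]? = some (fs t) := by simp [t.isLt]
  rw [partialChain, List.take_add_one, List.foldl_append, h]
  rfl

section Identification

variable {X : Type*} {T : ℕ} {k : Fin T → ℕ} {kc : ℕ}

/-- The unlabeled data: `k t` simple-task inputs for each step `t` and `kc` composite inputs;
their labels and chains of thought are determined by `fs`. -/
abbrev Dataset (X : Type*) (k : Fin T → ℕ) (kc : ℕ) : Type _ :=
  ((t : Fin T) → Fin (k t) → X) × (Fin kc → X)

noncomputable def datasetPMF (D₀ : PMF X) (D : Fin T → PMF X) (k : Fin T → ℕ) (kc : ℕ) :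
    PMF (Dataset X k kc) :=
  (PMF.pi fun t => PMF.pi fun _ : Fin (k t) => D t).prod (PMF.pi fun _ : Fin kc => D₀)

def stepConsistent (fs : Fin T → X → X) (t : Fin T) (g : X → X) : Set (Dataset X k kc) :=
  {w | (∀ i, g (w.1 t i) = fs t (w.1 t i)) ∧
    ∀ i, g (partialChain fs t (w.2 i)) = partialChain fs ((t : ℕ) + 1) (w.2 i)}

def identifyingDatasets (H : Finset (X → X)) (fs : Fin T → X → X) : Set (Dataset X k kc) :=
  {w | (∀ t, ∀ g ∈ H, w ∈ stepConsistent fs t g → g = fs t) ∧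
    ∀ h : Fin T → X → X, (∀ t, h t ∈ H ∧ w ∈ stepConsistent fs t (h t)) →
      compChain h = compChain fs}

theorem stepConsistent_eq_prod (fs : Fin T → X → X) (t : Fin T) (g : X → X) :
    (stepConsistent fs t g : Set (Dataset X k kc)) =
      (Function.eval t ⁻¹' Set.univ.pi fun _ => {x | g x = fs t x}) ×ˢ
        Set.univ.pi fun _ => partialChain fs t ⁻¹' {x | g x = fs t x} := by
  ext w
  simp [stepConsistent, partialChain_succ]

theorem datasetPMF_stepConsistent {fs : Fin T → X → X} {D₀ : PMF X} {D : Fin T → PMF X}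
    {t : Fin T} (hD : D t = D₀.map (partialChain fs t)) (g : X → X) :
    (datasetPMF D₀ D k kc).toOuterMeasure (stepConsistent fs t g) =
      (D t).toOuterMeasure {x | g x = fs t x} ^ (kc + k t) := by
  rw [stepConsistent_eq_prod, datasetPMF, PMF.toOuterMeasure_prod_prod,
    PMF.toOuterMeasure_pi_eval_preimage, PMF.toOuterMeasure_pi_univ_pi,
    PMF.toOuterMeasure_pi_univ_pi, hD, ← PMF.toOuterMeasure_map_apply]
  simp [pow_add, mul_comm]

theorem compl_identifyingDatasets_subset [DecidableEq (X → X)] (H : Finset (X → X))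
    (fs : Fin T → X → X) :
    (identifyingDatasets H fs : Set (Dataset X k kc))ᶜ ⊆
      ⋃ t, ⋃ g ∈ H.erase (fs t), stepConsistent fs t g := by
  intro w hw
  by_contra hnot
  have hstep : ∀ t, ∀ g ∈ H, w ∈ stepConsistent fs t g → g = fs t := fun t g hg hw' =>
    by_contra fun hne => hnot (Set.mem_iUnion_of_mem t
      (Set.mem_biUnion (Finset.mem_erase.mpr ⟨hne, hg⟩) hw'))
  exact hw ⟨hstep, fun h hh => congrArg compChain (funext fun t => hstep t (h t) (hh t).1 (hh t).2)⟩

end Identification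

theorem expcot_identification_matched_general {V : Type*}
    (H : Finset (List V → List V))
    (T : ℕ) (fs : Fin T → (List V → List V)) (hfs : ∀ t, fs t ∈ H)
    (D₀ : PMF (List V)) (D : Fin T → PMF (List V))
    (hD : ∀ t : Fin T, D t = D₀.map (partialChain fs t))
    (ε₀ : ℝ) (hε₀ : 0 < ε₀)
    (hdist : ∀ f ∈ H, ∀ g ∈ H, f ≠ g → ∀ t : Fin T,
      ENNReal.ofReal ε₀ < (D t).toOuterMeasure {x | f x ≠ g x})
    (k : Fin T → ℕ) (kc : ℕ) (δ : ℝ) (hδ0 : 0 < δ)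
    (hk : ∀ t : Fin T,
      (1 / ε₀) * (Real.log H.card + Real.log ((T : ℝ) / δ)) ≤ ((kc + k t : ℕ) : ℝ)) :
    1 - δ ≤
      (∑' w : ((t : Fin T) → Fin (k t) → List V) × (Fin kc → List V),
        Set.indicator
          {w : ((t : Fin T) → Fin (k t) → List V) × (Fin kc → List V) |
            (∀ t : Fin T, ∀ g ∈ H,
              ((∀ i, g (w.1 t i) = fs t (w.1 t i)) ∧
                (∀ i, g (partialChain fs t (w.2 i)) =
                  partialChain fs ((t : ℕ) + 1) (w.2 i))) → g = fs t) ∧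
            ∀ h : Fin T → (List V → List V),
              (∀ t : Fin T, h t ∈ H ∧
                (∀ i, h t (w.1 t i) = fs t (w.1 t i)) ∧
                (∀ i, h t (partialChain fs t (w.2 i)) =
                  partialChain fs ((t : ℕ) + 1) (w.2 i))) →
              compChain h = compChain fs}
          (fun w => (∏ t, ∏ i, D t (w.1 t i)) * ∏ i, D₀ (w.2 i)) w).toReal := by
  classical
  set P := datasetPMF D₀ D k kc
  have hevent : ∀ t, ∀ g ∈ H.erase (fs t), P.toOuterMeasure (stepConsistent fs t g) ≤
      ENNReal.ofReal (δ / (T * H.card)) := by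
    intro t g hg
    obtain ⟨hne, hgH⟩ := Finset.mem_erase.mp hg
    rw [datasetPMF_stepConsistent (hD t)]
    refine (PMF.toOuterMeasure_pow_le_exp_neg _ hε₀.le (hdist g hgH (fs t) (hfs t) hne t) _).trans
      (ENNReal.ofReal_le_ofReal (Real.exp_neg_mul_le_of_sample_size hε₀ hδ0 ?_ ?_ (hk t)))
    · exact_mod_cast Finset.card_pos.mpr ⟨g, hgH⟩
    · exact_mod_cast t.pos
  have hfail : P.toOuterMeasure (identifyingDatasets H fs)ᶜ ≤ ENNReal.ofReal δ :=
    calc P.toOuterMeasure (identifyingDatasets H fs)ᶜ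
        ≤ P.toOuterMeasure (⋃ t, ⋃ g ∈ H.erase (fs t), stepConsistent fs t g) :=
          MeasureTheory.measure_mono (compl_identifyingDatasets_subset H fs)
      _ ≤ Fintype.card (Fin T) * H.card * ENNReal.ofReal (δ / (T * H.card)) :=
          MeasureTheory.measure_iUnion_biUnion_le_mul _ _ _ (fun _ => Finset.card_erase_le) hevent
      _ ≤ ENNReal.ofReal δ := by
          simpa using ENNReal.natCast_mul_ofReal_div_le (T * H.card) hδ0.le
  exact (PMF.toOuterMeasure_apply P _) ▸ P.one_sub_le_toReal_toOuterMeasure hδ0.le hfail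

/-- Matched-distribution version of the chain-of-thought identification
result.  The step-`t` simple-task input distribution is the pushforward
`D t = D₀.map (z_t)` of the composite input distribution `D₀` under
`z_t = f_{t−1} ∘ ⋯ ∘ f_1` (so simple-task examples and the step-`t` pairs of the
composite chain-of-thought examples are i.i.d. from the same labeled distribution).
If `H` is `ε₀`-distinguishable under every `D t` and
`k_c + k_t ≥ (1/ε₀)(ln|H| + ln(T/δ))` for every `t`, then with probability at least
`1 − δ` over all datasets, for every step `t` the only `g ∈ H` consistent with both
the simple-task examples and the step-`t` pairs is `fs t`; consequently any composition
of per-step consistent hypotheses equals the target composition `f₀ = compChain fs`. -/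
theorem expcot_identification_matched {V : Type*} [Fintype V] [Nonempty V]
    (H : Finset (List V → List V)) (hH : H.Nonempty)
    (T : ℕ) (hT : 1 ≤ T) (fs : Fin T → (List V → List V)) (hfs : ∀ t, fs t ∈ H)
    (D₀ : PMF (List V)) (D : Fin T → PMF (List V))
    (hD : ∀ t : Fin T, D t = D₀.map (partialChain fs t))
    (ε₀ : ℝ) (hε₀ : 0 < ε₀)
    (hdist : ∀ f ∈ H, ∀ g ∈ H, f ≠ g → ∀ t : Fin T,
      ENNReal.ofReal ε₀ < (D t).toOuterMeasure {x | f x ≠ g x})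
    (k : Fin T → ℕ) (kc : ℕ) (δ : ℝ) (hδ0 : 0 < δ) (hδ1 : δ < 1)
    (hk : ∀ t : Fin T,
      (1 / ε₀) * (Real.log H.card + Real.log ((T : ℝ) / δ)) ≤ ((kc + k t : ℕ) : ℝ)) :
    1 - δ ≤
      (∑' w : ((t : Fin T) → Fin (k t) → List V) × (Fin kc → List V),
        Set.indicator
          {w : ((t : Fin T) → Fin (k t) → List V) × (Fin kc → List V) |
            (∀ t : Fin T, ∀ g ∈ H,
              ((∀ i, g (w.1 t i) = fs t (w.1 t i)) ∧
                (∀ i, g (partialChain fs t (w.2 i)) =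
                  partialChain fs ((t : ℕ) + 1) (w.2 i))) → g = fs t) ∧
            ∀ h : Fin T → (List V → List V),
              (∀ t : Fin T, h t ∈ H ∧
                (∀ i, h t (w.1 t i) = fs t (w.1 t i)) ∧
                (∀ i, h t (partialChain fs t (w.2 i)) =
                  partialChain fs ((t : ℕ) + 1) (w.2 i))) →
              compChain h = compChain fs}
          (fun w => (∏ t, ∏ i, D t (w.1 t i)) * ∏ i, D₀ (w.2 i)) w).toReal :=
  expcot_identification_matched_general H T fs hfs D₀ D hD ε₀ hε₀ hdist k kc δ hδ0 hk
end
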